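/- The measure with density 1/(x+y-2xy)^2 on (0,1)×(0,1) is invariant under the natural extension of the even Farey map F̄_e, where F̄_e(x,y) = (x/(1-2x), y/(1+2y)) for x ∈ [0,1/3), F̄_e(x,y) = ((1-2x)/x, 1/(2+y)) for x ∈ [1/3,1/2), and F̄_e(x,y) = ((2x-1)/x, 1/(2-y)) for x ∈ [1/2,1). -/

import Mathlib

open MeasureTheory

/-- The natural extension of the even Farey map. -/
noncomputable def evenFareyNatExt (p : ℝ × ℝ) : ℝ × ℝ :=
  if p.1 < 1/3 then (p.1 / (1 - 2*p.1), p.2 / (1 + 2*p.2))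
  else if p.1 < 1/2 then ((1 - 2*p.1) / p.1, 1 / (2 + p.2))
  else ((2*p.1 - 1) / p.1, 1 / (2 - p.2))

/-- The measure with density 1/(x+y-2xy)² on (0,1)×(0,1). -/
noncomputable def evenFareyMeasure : Measure (ℝ × ℝ) :=
  ((volume : Measure (ℝ × ℝ)).restrict (Set.Ioo 0 1 ×ˢ Set.Ioo 0 1)).withDensity
    (fun p => ENNReal.ofReal (1 / (p.1 + p.2 - 2 * p.1 * p.2)^2))

/-!
On the vertical strip `Iₖ × (0,1)`, where `I₁ = (0,1/3)`, `I₂ = (1/3,1/2)`, `I₃ = (1/2,1)`, the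
map is `(x, y) ↦ (fₖ x, fₖ⁻¹ y)` with `fₖ : Iₖ → (0,1)` the `k`-th branch of the even Farey map.
It therefore carries the vertical strip bijectively onto the horizontal strip `(0,1) × Iₖ`, and
its Jacobian exactly compensates the change of the density: writing `fₖ = pₖ / qₖ` and
`fₖ⁻¹ = p'ₖ / q'ₖ` as Möbius maps, `x + y - 2xy` gets divided by `qₖ(x) q'ₖ(y)` while the Jacobian
is `1 / (qₖ(x) q'ₖ(y))²`. By the change of variables formula the measure on each vertical strip is
pushed forward to the measure on the corresponding horizontal strip, and both families of strips
tile the unit square up to null sets.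
-/

open Set
open scoped ENNReal

theorem map_withDensity_restrict_of_abs_det_mul_eq {E : Type*} [NormedAddCommGroup E]
    [NormedSpace ℝ E] [FiniteDimensional ℝ E] [MeasurableSpace E] [BorelSpace E]
    (μ : Measure E) [μ.IsAddHaarMeasure] {s : Set E} {f : E → E}
    {f' : E → E →L[ℝ] E} {ρ : E → ℝ≥0∞} (hs : MeasurableSet s)
    (hf' : ∀ x ∈ s, HasFDerivWithinAt f (f' x) s x) (hf : InjOn f s) (hfm : Measurable f)
    (hρ : ∀ x ∈ s, ENNReal.ofReal |(f' x).det| * ρ (f x) = ρ x) :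
    ((μ.restrict s).withDensity ρ).map f = (μ.restrict (f '' s)).withDensity ρ := by
  ext A hA
  have hpre : ∀ x ∈ s,
      (f ⁻¹' A).indicator ρ x = ENNReal.ofReal |(f' x).det| * A.indicator ρ (f x) := by
    intro x hx
    by_cases hxA : f x ∈ A
    · simp [hxA, hρ x hx]
    · simp [hxA]
  rw [Measure.map_apply hfm hA, withDensity_apply _ (hfm hA), withDensity_apply _ hA,
    ← lintegral_indicator (hfm hA), setLIntegral_congr_fun hs hpre,
    ← lintegral_image_eq_lintegral_abs_det_fderiv_mul μ hs hf' hf, lintegral_indicator hA]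

theorem map_withDensity_restrict_prod_of_invOn {F : ℝ × ℝ → ℝ × ℝ} {f g f' g' : ℝ → ℝ}
    {s t : Set ℝ} {ρ : ℝ × ℝ → ℝ≥0∞} (hs : MeasurableSet s) (ht : MeasurableSet t)
    (hF : EqOn F (Prod.map f g) (s ×ˢ t)) (hinv : InvOn g f s t)
    (hf : MapsTo f s t) (hg : MapsTo g t s) (hfm : Measurable f) (hgm : Measurable g)
    (hf' : ∀ x ∈ s, HasDerivAt f (f' x) x) (hg' : ∀ y ∈ t, HasDerivAt g (g' y) y)
    (hρ : ∀ x ∈ s, ∀ y ∈ t, ENNReal.ofReal |f' x * g' y| * ρ (f x, g y) = ρ (x, y)) :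
    ((volume.restrict (s ×ˢ t)).withDensity ρ).map F =
      (volume.restrict (t ×ˢ s)).withDensity ρ := by
  have hst : MeasurableSet (s ×ˢ t) := hs.prod ht
  have himage : Prod.map f g '' (s ×ˢ t) = t ×ˢ s :=
    ((hinv.bijOn hf hg).prodMap (hinv.symm.bijOn hg hf)).image_eq
  rw [Measure.map_congr ((withDensity_absolutelyContinuous _ _).ae_le
    (ae_restrict_of_forall_mem hst hF)), ← himage]
  refine map_withDensity_restrict_of_abs_det_mul_eq volume hst
    (f' := fun p ↦ (ContinuousLinearMap.toSpanSingleton ℝ (f' p.1)).prodMap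
      (ContinuousLinearMap.toSpanSingleton ℝ (g' p.2)))
    (fun p hp ↦ ((hf' p.1 hp.1).hasFDerivAt.prodMap p (hg' p.2 hp.2).hasFDerivAt).hasFDerivWithinAt)
    (hinv.1.injOn.prodMap hinv.2.injOn) (hfm.prodMap hgm) ?_
  rintro ⟨x, y⟩ ⟨hx, hy⟩
  rw [ContinuousLinearMap.det, ContinuousLinearMap.coe_prodMap, LinearMap.det_prodMap,
    ← ContinuousLinearMap.det, ← ContinuousLinearMap.det,
    ContinuousLinearMap.det_toSpanSingleton, ContinuousLinearMap.det_toSpanSingleton]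
  exact hρ x hx y hy

theorem restrict_Ioo_eq_add_restrict_Ioo {μ : Measure ℝ} [NullSingletonClass μ] {a b c : ℝ}
    (hab : a < b) (hbc : b ≤ c) :
    μ.restrict (Ioo a c) = μ.restrict (Ioo a b) + μ.restrict (Ioo b c) := by
  rw [← Measure.restrict_union (Ioo_disjoint_Ioo.2 (min_le_left _ _ |>.trans (le_max_right _ _)))
    measurableSet_Ioo, ← Ioo_union_Ico_eq_Ioo hab hbc]
  exact Measure.restrict_congr_set ((ae_eq_refl _).union Ioo_ae_eq_Ico.symm)

noncomputable def evenFareyDensity (p : ℝ × ℝ) : ℝ≥0∞ :=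
  ENNReal.ofReal (1 / (p.1 + p.2 - 2 * p.1 * p.2) ^ 2)

noncomputable def evenFareyMeasureOn (S : Set (ℝ × ℝ)) : Measure (ℝ × ℝ) :=
  (volume.restrict S).withDensity evenFareyDensity

theorem evenFareyMeasure_eq_evenFareyMeasureOn :
    evenFareyMeasure = evenFareyMeasureOn (Ioo 0 1 ×ˢ Ioo 0 1) :=
  rfl

theorem volume_restrict_Ioo_zero_one_eq_add :
    volume.restrict (Ioo (0 : ℝ) 1) = volume.restrict (Ioo 0 (1/3))
      + volume.restrict (Ioo (1/3) (1/2)) + volume.restrict (Ioo (1/2) 1) := by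
  rw [restrict_Ioo_eq_add_restrict_Ioo (b := 1/2) (by norm_num) (by norm_num),
    restrict_Ioo_eq_add_restrict_Ioo (b := 1/3) (by norm_num) (by norm_num)]

theorem evenFareyMeasure_eq_add_vertical :
    evenFareyMeasure = evenFareyMeasureOn (Ioo 0 (1/3) ×ˢ Ioo 0 1)
      + evenFareyMeasureOn (Ioo (1/3) (1/2) ×ˢ Ioo 0 1)
      + evenFareyMeasureOn (Ioo (1/2) 1 ×ˢ Ioo 0 1) := by
  simp only [evenFareyMeasure_eq_evenFareyMeasureOn, evenFareyMeasureOn,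
    ← withDensity_add_measure, Measure.volume_eq_prod, ← Measure.prod_restrict, ← Measure.add_prod,
    ← volume_restrict_Ioo_zero_one_eq_add]

theorem evenFareyMeasure_eq_add_horizontal :
    evenFareyMeasure = evenFareyMeasureOn (Ioo 0 1 ×ˢ Ioo 0 (1/3))
      + evenFareyMeasureOn (Ioo 0 1 ×ˢ Ioo (1/3) (1/2))
      + evenFareyMeasureOn (Ioo 0 1 ×ˢ Ioo (1/2) 1) := by
  simp only [evenFareyMeasure_eq_evenFareyMeasureOn, evenFareyMeasureOn,
    ← withDensity_add_measure, Measure.volume_eq_prod, ← Measure.prod_restrict, ← Measure.prod_add,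
    ← volume_restrict_Ioo_zero_one_eq_add]

theorem evenFareyDensity_first_branch {x y : ℝ} (hx : x < 1/3) (hy : 0 < y) :
    ENNReal.ofReal |1 / (1 - 2 * x) ^ 2 * (1 / (1 + 2 * y) ^ 2)|
      * evenFareyDensity (x / (1 - 2 * x), y / (1 + 2 * y)) = evenFareyDensity (x, y) := by
  have : 1 - 2 * x ≠ 0 := by linarith
  have : 1 + 2 * y ≠ 0 := by linarith
  rw [evenFareyDensity, evenFareyDensity, ← ENNReal.ofReal_mul (abs_nonneg _),
    abs_of_nonneg (by positivity)]
  congr 1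
  field_simp
  ring

theorem evenFareyDensity_second_branch {x y : ℝ} (hx : 0 < x) (hy : 0 < y) :
    ENNReal.ofReal |-1 / x ^ 2 * (-1 / (2 + y) ^ 2)|
      * evenFareyDensity ((1 - 2 * x) / x, 1 / (2 + y)) = evenFareyDensity (x, y) := by
  have : x ≠ 0 := hx.ne'
  have : 2 + y ≠ 0 := by linarith
  rw [evenFareyDensity, evenFareyDensity, ← ENNReal.ofReal_mul (abs_nonneg _),
    neg_div, neg_div, neg_mul_neg, abs_of_nonneg (by positivity)]
  congr 1
  field_simp
  ring

theorem evenFareyDensity_third_branch {x y : ℝ} (hx : 0 < x) (hy : y < 1) :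
    ENNReal.ofReal |1 / x ^ 2 * (1 / (2 - y) ^ 2)|
      * evenFareyDensity ((2 * x - 1) / x, 1 / (2 - y)) = evenFareyDensity (x, y) := by
  have : x ≠ 0 := hx.ne'
  have : 2 - y ≠ 0 := by linarith
  rw [evenFareyDensity, evenFareyDensity, ← ENNReal.ofReal_mul (abs_nonneg _),
    abs_of_nonneg (by positivity)]
  congr 1
  field_simp
  ring

theorem map_evenFareyNatExt_first_branch :
    (evenFareyMeasureOn (Ioo 0 (1/3) ×ˢ Ioo 0 1)).map evenFareyNatExt
      = evenFareyMeasureOn (Ioo 0 1 ×ˢ Ioo 0 (1/3)) := by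
  have hf : MapsTo (fun x : ℝ ↦ x / (1 - 2 * x)) (Ioo 0 (1/3)) (Ioo 0 1) := fun x ⟨_, _⟩ ↦
    ⟨(lt_div_iff₀ (by linarith)).2 (by linarith), (div_lt_iff₀ (by linarith)).2 (by linarith)⟩
  have hg : MapsTo (fun y : ℝ ↦ y / (1 + 2 * y)) (Ioo 0 1) (Ioo 0 (1/3)) := fun y ⟨_, _⟩ ↦
    ⟨(lt_div_iff₀ (by linarith)).2 (by linarith), (div_lt_iff₀ (by linarith)).2 (by linarith)⟩
  have hinv : InvOn (fun y : ℝ ↦ y / (1 + 2 * y)) (fun x ↦ x / (1 - 2 * x))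
      (Ioo 0 (1/3)) (Ioo 0 1) := by
    constructor
    · rintro x ⟨_, _⟩
      have hx : 1 - 2 * x ≠ 0 := by linarith
      have hden : 1 + 2 * (x / (1 - 2 * x)) = 1 / (1 - 2 * x) := by field_simp; ring
      simp only [hden, div_div_div_cancel_right₀ hx, div_one]
    · rintro y ⟨_, _⟩
      have : 1 + 2 * y ≠ 0 := by linarith
      field_simp
      ring
  have hF : EqOn evenFareyNatExt (Prod.map (fun x ↦ x / (1 - 2 * x)) (fun y ↦ y / (1 + 2 * y)))
      (Ioo 0 (1/3) ×ˢ Ioo 0 1) := fun p hp ↦ if_pos hp.1.2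
  refine map_withDensity_restrict_prod_of_invOn measurableSet_Ioo measurableSet_Ioo hF hinv hf hg
    (by fun_prop) (by fun_prop) (f' := fun x ↦ 1 / (1 - 2 * x) ^ 2)
    (g' := fun y ↦ 1 / (1 + 2 * y) ^ 2) ?_ ?_
    (fun x hx y hy ↦ evenFareyDensity_first_branch hx.2 hy.1)
  · rintro x ⟨_, _⟩
    have hx : 1 - 2 * x ≠ 0 := by linarith
    refine ((hasDerivAt_id' x).div ((hasDerivAt_id' x).const_mul 2 |>.const_sub 1) hx)
      |>.congr_deriv ?_
    field_simp
    ring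
  · rintro y ⟨_, _⟩
    have hy : 1 + 2 * y ≠ 0 := by linarith
    refine ((hasDerivAt_id' y).div ((hasDerivAt_id' y).const_mul 2 |>.const_add 1) hy)
      |>.congr_deriv ?_
    field_simp
    ring

theorem map_evenFareyNatExt_second_branch :
    (evenFareyMeasureOn (Ioo (1/3) (1/2) ×ˢ Ioo 0 1)).map evenFareyNatExt
      = evenFareyMeasureOn (Ioo 0 1 ×ˢ Ioo (1/3) (1/2)) := by
  have hf : MapsTo (fun x : ℝ ↦ (1 - 2 * x) / x) (Ioo (1/3) (1/2)) (Ioo 0 1) := fun x ⟨_, _⟩ ↦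
    ⟨(lt_div_iff₀ (by linarith)).2 (by linarith), (div_lt_iff₀ (by linarith)).2 (by linarith)⟩
  have hg : MapsTo (fun y : ℝ ↦ 1 / (2 + y)) (Ioo 0 1) (Ioo (1/3) (1/2)) := fun y ⟨_, _⟩ ↦
    ⟨(lt_div_iff₀ (by linarith)).2 (by linarith), (div_lt_iff₀ (by linarith)).2 (by linarith)⟩
  have hinv : InvOn (fun y : ℝ ↦ 1 / (2 + y)) (fun x ↦ (1 - 2 * x) / x)
      (Ioo (1/3) (1/2)) (Ioo 0 1) := by
    constructor
    · rintro x ⟨_, _⟩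
      have : x ≠ 0 := by linarith
      field_simp
      ring
    · rintro y ⟨_, _⟩
      have : 2 + y ≠ 0 := by linarith
      field_simp
      ring
  have hF : EqOn evenFareyNatExt (Prod.map (fun x ↦ (1 - 2 * x) / x) (fun y ↦ 1 / (2 + y)))
      (Ioo (1/3) (1/2) ×ˢ Ioo 0 1) := fun p hp ↦
    (if_neg hp.1.1.not_gt).trans (if_pos hp.1.2)
  refine map_withDensity_restrict_prod_of_invOn measurableSet_Ioo measurableSet_Ioo hF hinv hf hg
    (by fun_prop) (by fun_prop) (f' := fun x ↦ -1 / x ^ 2) (g' := fun y ↦ -1 / (2 + y) ^ 2) ?_ ?_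
    (fun x hx y hy ↦ evenFareyDensity_second_branch (by linarith [hx.1]) hy.1)
  · rintro x ⟨_, _⟩
    have hx : x ≠ 0 := by linarith
    refine (((hasDerivAt_id' x).const_mul 2 |>.const_sub 1).div (hasDerivAt_id' x) hx)
      |>.congr_deriv ?_
    field_simp
    ring
  · rintro y ⟨_, _⟩
    have hy : 2 + y ≠ 0 := by linarith
    refine ((hasDerivAt_const y 1).div ((hasDerivAt_id' y).const_add 2) hy).congr_deriv ?_
    field_simp
    ring

theorem map_evenFareyNatExt_third_branch :
    (evenFareyMeasureOn (Ioo (1/2) 1 ×ˢ Ioo 0 1)).map evenFareyNatExt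
      = evenFareyMeasureOn (Ioo 0 1 ×ˢ Ioo (1/2) 1) := by
  have hf : MapsTo (fun x : ℝ ↦ (2 * x - 1) / x) (Ioo (1/2) 1) (Ioo 0 1) := fun x ⟨_, _⟩ ↦
    ⟨(lt_div_iff₀ (by linarith)).2 (by linarith), (div_lt_iff₀ (by linarith)).2 (by linarith)⟩
  have hg : MapsTo (fun y : ℝ ↦ 1 / (2 - y)) (Ioo 0 1) (Ioo (1/2) 1) := fun y ⟨_, _⟩ ↦
    ⟨(lt_div_iff₀ (by linarith)).2 (by linarith), (div_lt_iff₀ (by linarith)).2 (by linarith)⟩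
  have hinv : InvOn (fun y : ℝ ↦ 1 / (2 - y)) (fun x ↦ (2 * x - 1) / x)
      (Ioo (1/2) 1) (Ioo 0 1) := by
    constructor
    · rintro x ⟨_, _⟩
      have : x ≠ 0 := by linarith
      field_simp
      ring
    · rintro y ⟨_, _⟩
      have : 2 - y ≠ 0 := by linarith
      field_simp
      ring
  have hF : EqOn evenFareyNatExt (Prod.map (fun x ↦ (2 * x - 1) / x) (fun y ↦ 1 / (2 - y)))
      (Ioo (1/2) 1 ×ˢ Ioo 0 1) := fun p hp ↦
    (if_neg (not_lt.2 (by linarith [hp.1.1]))).trans (if_neg (not_lt.2 hp.1.1.le))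
  refine map_withDensity_restrict_prod_of_invOn measurableSet_Ioo measurableSet_Ioo hF hinv hf hg
    (by fun_prop) (by fun_prop) (f' := fun x ↦ 1 / x ^ 2) (g' := fun y ↦ 1 / (2 - y) ^ 2) ?_ ?_
    (fun x hx y hy ↦ evenFareyDensity_third_branch (by linarith [hx.1]) hy.2)
  · rintro x ⟨_, _⟩
    have hx : x ≠ 0 := by linarith
    refine (((hasDerivAt_id' x).const_mul 2 |>.sub_const 1).div (hasDerivAt_id' x) hx)
      |>.congr_deriv ?_
    field_simp
    ring
  · rintro y ⟨_, _⟩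
    have hy : 2 - y ≠ 0 := by linarith
    refine ((hasDerivAt_const y 1).div ((hasDerivAt_id' y).const_sub 2) hy).congr_deriv ?_
    field_simp
    ring

theorem measurable_evenFareyNatExt : Measurable evenFareyNatExt :=
  Measurable.ite (measurableSet_lt measurable_fst measurable_const) (by fun_prop)
    (Measurable.ite (measurableSet_lt measurable_fst measurable_const) (by fun_prop) (by fun_prop))

theorem measurePreserving_evenFareyNatExt :
    MeasurePreserving evenFareyNatExt evenFareyMeasure evenFareyMeasure := by
  refine ⟨measurable_evenFareyNatExt, ?_⟩
  conv_lhs => rw [evenFareyMeasure_eq_add_vertical]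
  rw [Measure.map_add _ _ measurable_evenFareyNatExt,
    Measure.map_add _ _ measurable_evenFareyNatExt, map_evenFareyNatExt_first_branch,
    map_evenFareyNatExt_second_branch, map_evenFareyNatExt_third_branch,
    evenFareyMeasure_eq_add_horizontal]

theorem evenFareyNatExt_invariant :
    ∀ A : Set (ℝ × ℝ), MeasurableSet A →
      evenFareyMeasure (evenFareyNatExt ⁻¹' A) = evenFareyMeasure A :=
  fun _ hA ↦ measurePreserving_evenFareyNatExt.measure_preimage hA.nullMeasurableSet
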